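/- arXiv:1408.1083 — 3 statements merged into one kernel-verified Lean document; each statement's English description precedes it below -/
import Mathlib

section
/- For real numbers x, t with 1 ≤ x < t, the sum ∑_{1 ≤ k ≤ x} 1/√(kt - k²) is at most 2·arctan(√(x/(t-x))) + 1/√(t-1) + 2√x/(t·√(t-x)). -/
/-!
The summand `w(u) = 1/√(u(t-u))` decreases on `(0, t/2]`, increases on `[t/2, t)`, and has
antiderivative `2 arctan √(u/(t-u))`. For any `f` that decreases up to `c` and increases after it,
`f(k+1)` is at most every value of `f` on `[k, k+1]` up to the error `g(k+1) - g(k)`, where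
`g(u) = f(max u c)`: the error is `0` left of `c`, and otherwise pays for comparing with the left
endpoint (or with `f(c)` on the step containing `c`). The errors telescope, so with `n = ⌊x⌋`,
`∑_{2 ≤ k ≤ n} w(k) ≤ ∫_1^n w + g(n) - g(1) ≤ 2 arctan √(x/(t-x)) + g(n) - g(1)`. Finally
`g(n) - g(1)` vanishes if `n ≤ t/2` and is otherwise at most `w(n) ≤ 2√x/(t√(t-x))`, while the
term `k = 1` is `1/√(t-1)`.
-/

open Real Set

section AntitoneMonotone

variable {f : ℝ → ℝ} {c : ℝ}

theorem sub_sub_max_le_of_antitoneOn_of_monotoneOn {p q : ℝ} (hanti : AntitoneOn f (Icc p c))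
    (hmono : MonotoneOn f (Icc c q)) {a b u : ℝ} (hpa : p ≤ a) (hbq : b ≤ q)
    (hu : u ∈ Icc a b) :
    f b - (f (max b c) - f (max a c)) ≤ f u := by
  obtain ⟨hau, hub⟩ := hu
  rcases le_total b c with hbc | hcb
  · rw [max_eq_right hbc, max_eq_right (hau.trans (hub.trans hbc)), sub_self, sub_zero]
    exact hanti ⟨by linarith, by linarith⟩ ⟨by linarith, hbc⟩ hub
  rw [max_eq_left hcb, sub_sub_cancel]
  rcases le_total c a with hca | hac
  · rw [max_eq_left hca]
    exact hmono ⟨hca, by linarith⟩ ⟨by linarith, by linarith⟩ hau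
  rw [max_eq_right hac]
  rcases le_total u c with huc | hcu
  · exact hanti ⟨by linarith, huc⟩ ⟨by linarith, le_rfl⟩ huc
  · exact hmono ⟨le_rfl, by linarith⟩ ⟨hcu, by linarith⟩ hcu

theorem sum_le_integral_add_of_antitoneOn_of_monotoneOn {x₀ : ℝ} {N : ℕ}
    (hanti : AntitoneOn f (Icc x₀ c)) (hmono : MonotoneOn f (Icc c (x₀ + N)))
    (hf : IntervalIntegrable f MeasureTheory.volume x₀ (x₀ + N)) :
    ∑ i ∈ Finset.range N, f (x₀ + ↑(i + 1)) ≤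
      (∫ u in x₀..x₀ + N, f u) + (f (max (x₀ + N) c) - f (max x₀ c)) := by
  set g : ℕ → ℝ := fun i ↦ f (max (x₀ + i) c)
  have hmem : ∀ j ≤ N, x₀ + (j : ℝ) ∈ uIcc x₀ (x₀ + N) := fun j hj ↦ by
    rw [uIcc_of_le (by simp)]
    exact ⟨by simp, by gcongr⟩
  have hint : ∀ i < N, IntervalIntegrable f MeasureTheory.volume (x₀ + i) (x₀ + ↑(i + 1)) :=
    fun i hi ↦ hf.mono_set (uIcc_subset_uIcc (hmem i hi.le) (hmem (i + 1) hi))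
  calc ∑ i ∈ Finset.range N, f (x₀ + ↑(i + 1))
      = ∑ i ∈ Finset.range N, (f (x₀ + ↑(i + 1)) - (g (i + 1) - g i)) + (g N - g 0) := by
        rw [Finset.sum_sub_distrib, Finset.sum_range_sub]; ring
    _ ≤ (∑ i ∈ Finset.range N, ∫ u in x₀ + i..x₀ + ↑(i + 1), f u) + (g N - g 0) := by
        gcongr with i hi
        rw [Finset.mem_range] at hi
        have hstep := intervalIntegral.integral_mono_on (by push_cast; linarith)
          intervalIntegrable_const (hint i hi) fun u hu ↦
            sub_sub_max_le_of_antitoneOn_of_monotoneOn hanti hmono (by simp)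
              (by gcongr; exact hi) hu
        simpa [g] using hstep
    _ = (∫ u in x₀..x₀ + N, f u) + (f (max (x₀ + N) c) - f (max x₀ c)) := by
        rw [intervalIntegral.sum_integral_adjacent_intervals (a := fun i : ℕ ↦ x₀ + i) hint]
        simp [g]

end AntitoneMonotone

section ArcsineWeight

/-- `π` times the density of the arcsine law on `[0, t]`. -/
noncomputable def arcsineWeight (t u : ℝ) : ℝ := 1 / √(u * t - u ^ 2)

variable {t : ℝ}

theorem arcsineWeight_nonneg (t u : ℝ) : 0 ≤ arcsineWeight t u := by
  unfold arcsineWeight; positivity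

theorem arcsineWeight_le_arcsineWeight {u v : ℝ} (hu : 0 < u * t - u ^ 2)
    (huv : u * t - u ^ 2 ≤ v * t - v ^ 2) : arcsineWeight t v ≤ arcsineWeight t u :=
  one_div_le_one_div_of_le (sqrt_pos.2 hu) (sqrt_le_sqrt huv)

theorem antitoneOn_arcsineWeight : AntitoneOn (arcsineWeight t) (Ioc 0 (t / 2)) :=
  fun u ⟨hu0, hut⟩ v ⟨_, hvt⟩ huv ↦ arcsineWeight_le_arcsineWeight (by nlinarith)
    (by nlinarith [mul_nonneg (sub_nonneg.2 huv) (by linarith : (0 : ℝ) ≤ t - u - v)])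

theorem monotoneOn_arcsineWeight : MonotoneOn (arcsineWeight t) (Ico (t / 2) t) :=
  fun u ⟨htu, hut⟩ v ⟨_, hvt⟩ huv ↦ arcsineWeight_le_arcsineWeight (by nlinarith)
    (by nlinarith [mul_nonneg (sub_nonneg.2 huv) (by linarith : (0 : ℝ) ≤ u + v - t)])

theorem continuousOn_arcsineWeight : ContinuousOn (arcsineWeight t) (Ioo 0 t) :=
  continuousOn_const.div (by fun_prop) fun _ ⟨hu0, hut⟩ ↦ (sqrt_pos.2 (by nlinarith)).ne'

theorem intervalIntegrable_arcsineWeight {a b : ℝ} (ha : 0 < a) (hab : a ≤ b) (hbt : b < t) :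
    IntervalIntegrable (arcsineWeight t) MeasureTheory.volume a b :=
  (continuousOn_arcsineWeight.mono fun _ hu ↦
    ⟨ha.trans_le hu.1, hu.2.trans_lt hbt⟩).intervalIntegrable_of_Icc hab

theorem hasDerivAt_two_mul_arctan_sqrt_div {u : ℝ} (hu0 : 0 < u) (hut : u < t) :
    HasDerivAt (fun v ↦ 2 * arctan √(v / (t - v))) (arcsineWeight t u) u := by
  have htu : 0 < t - u := by linarith
  have hdiv : HasDerivAt (fun v ↦ v / (t - v)) (t / (t - u) ^ 2) u := by
    refine ((hasDerivAt_id u).div ((hasDerivAt_const u t).sub (hasDerivAt_id u))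
      htu.ne').congr_deriv ?_
    simp
  refine ((((hasDerivAt_sqrt (div_pos hu0 htu).ne').comp u hdiv).arctan).const_mul
    2).congr_deriv ?_
  rw [Function.comp_apply, sq_sqrt (div_pos hu0 htu).le, sqrt_div hu0.le, arcsineWeight,
    show u * t - u ^ 2 = u * (t - u) by ring, sqrt_mul hu0.le]
  have := sqrt_pos.2 hu0
  have := sqrt_pos.2 htu
  field_simp
  rw [sq_sqrt htu.le]
  ring

theorem integral_arcsineWeight {a b : ℝ} (ha : 0 < a) (hab : a ≤ b) (hbt : b < t) :
    ∫ u in a..b, arcsineWeight t u =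
      2 * arctan √(b / (t - b)) - 2 * arctan √(a / (t - a)) := by
  refine intervalIntegral.integral_eq_sub_of_hasDerivAt
    (f := fun v ↦ 2 * arctan √(v / (t - v))) (fun u hu ↦ ?_)
    (intervalIntegrable_arcsineWeight ha hab hbt)
  rw [uIcc_of_le hab] at hu
  exact hasDerivAt_two_mul_arctan_sqrt_div (ha.trans_le hu.1) (hu.2.trans_lt hbt)

theorem arcsineWeight_le_of_half_le {n x : ℝ} (hn : t ≤ 2 * n) (hnx : n ≤ x) (hxt : x < t) :
    arcsineWeight t n ≤ 2 * √x / (t * √(t - x)) := by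
  have hn0 : 0 < n := by linarith
  have hnt : 0 < n * t - n ^ 2 := by nlinarith
  have hden : 0 < t * √(t - x) := mul_pos (by linarith) (sqrt_pos.2 (by linarith))
  rw [arcsineWeight, div_le_div_iff₀ (sqrt_pos.2 hnt) hden, one_mul,
    ← pow_le_pow_iff_left₀ hden.le (by positivity) two_ne_zero]
  simp only [mul_pow, sq_sqrt (by linarith : 0 ≤ t - x), sq_sqrt (by linarith : 0 ≤ x),
    sq_sqrt hnt.le]
  calc t ^ 2 * (t - x) ≤ 4 * x * n * (t - n) :=
        mul_le_mul (by nlinarith) (by linarith) (by linarith) (by nlinarith)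
    _ = _ := by ring

theorem arcsineWeight_max_sub_arcsineWeight_max_le {m n x : ℝ} (hm0 : 0 < m) (hmn : m ≤ n)
    (hnx : n ≤ x) (hxt : x < t) :
    arcsineWeight t (max n (t / 2)) - arcsineWeight t (max m (t / 2)) ≤
      2 * √x / (t * √(t - x)) := by
  rcases le_total n (t / 2) with hnt | htn
  · rw [max_eq_right hnt, max_eq_right (hmn.trans hnt), sub_self]
    have : 0 < t := by linarith
    positivity
  · rw [max_eq_left htn]
    linarith [arcsineWeight_le_of_half_le (by linarith) hnx hxt,
      arcsineWeight_nonneg t (max m (t / 2))]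

end ArcsineWeight

open Real in
/-- For real `1 ≤ x < t`,
`∑_{1 ≤ k ≤ x} 1/√(kt - k²) ≤ 2 arctan √(x/(t-x)) + 1/√(t-1) + 2√x/(t√(t-x))`. -/
theorem stmt_5 (x t : ℝ) (hx : 1 ≤ x) (hxt : x < t) :
    ∑ k ∈ Finset.Icc 1 ⌊x⌋₊, 1 / Real.sqrt (k * t - (k : ℝ) ^ 2)
      ≤ 2 * Real.arctan (Real.sqrt (x / (t - x))) + 1 / Real.sqrt (t - 1)
        + 2 * Real.sqrt x / (t * Real.sqrt (t - x)) := by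
  obtain ⟨N, hN⟩ := Nat.exists_eq_add_of_le' (Nat.le_floor (by exact_mod_cast hx) : 1 ≤ ⌊x⌋₊)
  have hNx : 1 + (N : ℝ) ≤ x := by
    simpa [hN, add_comm] using Nat.floor_le (by linarith : 0 ≤ x)
  have hsum : ∑ k ∈ Finset.Icc 1 (N + 1), 1 / √(k * t - (k : ℝ) ^ 2) =
      arcsineWeight t 1 + ∑ i ∈ Finset.range N, arcsineWeight t (1 + ↑(i + 1)) := by
    rw [← Finset.Ico_add_one_right_eq_Icc, Finset.sum_Ico_eq_sum_range, Nat.add_sub_cancel,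
      Finset.sum_range_succ', add_comm]
    simp [arcsineWeight, add_comm]
  have hbound := sum_le_integral_add_of_antitoneOn_of_monotoneOn (c := t / 2) (x₀ := 1) (N := N)
    (antitoneOn_arcsineWeight.mono fun u hu ↦ ⟨by linarith [hu.1], hu.2⟩)
    (monotoneOn_arcsineWeight.mono fun u hu ↦ ⟨hu.1, by linarith [hu.2]⟩)
    (intervalIntegrable_arcsineWeight one_pos (by simp) (by linarith))
  rw [integral_arcsineWeight one_pos (by simp) (by linarith)] at hbound
  have hcorr := arcsineWeight_max_sub_arcsineWeight_max_le one_pos (by simp) hNx hxt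
  have harctan : arctan √((1 + N) / (t - (1 + N))) ≤ arctan √(x / (t - x)) :=
    arctan_le_arctan_iff.2 <| sqrt_le_sqrt <| by
      rw [div_le_div_iff₀ (by linarith) (by linarith)]; nlinarith
  have harctan_nonneg : 0 ≤ arctan √(1 / (t - 1)) := arctan_nonneg.2 (sqrt_nonneg _)
  rw [hN, hsum, show arcsineWeight t 1 = 1 / √(t - 1) by simp [arcsineWeight]]
  linarith
end

section
/- For every integer n ≥ 2, ∑_{k=1}^{n-1} 1/√(kn - k²) ≤ π + 1/√(n-1) + 2/√n. -/
/-!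
`x ↦ arcsin (2x/N - 1)` is an antiderivative of `1/√(x(N - x))` on `(0, N)` and increases by
exactly `π` over `[0, N]`. The summand `1/√(k(N - k))` decreases up to `N/2` and increases after,
so each term with `k < N - 1` is at most the increment of the antiderivative over the unit interval
next to `k` on the side where the summand is smaller: `[k - 1, k]` below `N/2`, `[k, k + 1]` above.
These intervals do not overlap, so those terms sum to at most `π`; the last term is `1/√(N - 1)`.
-/

open Real Finset

theorem sum_range_le_sub_of_valley {f G : ℕ → ℝ} (hG : Monotone G) {m L : ℕ} (hmL : m ≤ L)
    (hdec : ∀ i < m, f i ≤ G (i + 1) - G i)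
    (hinc : ∀ i, m ≤ i → i < L → f i ≤ G (i + 2) - G (i + 1)) :
    ∑ i ∈ range L, f i ≤ G (L + 1) - G 0 := by
  have hleft : ∑ i ∈ range m, f i ≤ G m - G 0 := by
    rw [← sum_range_sub]
    exact sum_le_sum fun i hi => hdec i (mem_range.1 hi)
  have hright : ∑ i ∈ Ico m L, f i ≤ G (L + 1) - G (m + 1) := by
    rw [← sum_Ico_sub (fun i => G (i + 1)) hmL]
    exact sum_le_sum fun i hi => hinc i (mem_Ico.1 hi).1 (mem_Ico.1 hi).2
  rw [← sum_range_add_sum_Ico f hmL]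
  linarith [hG m.le_succ]

theorem hasDerivAt_arcsin_two_mul_div_sub_one {N x : ℝ} (hx : 0 < x) (hxN : x < N) :
    HasDerivAt (fun y => arcsin (2 * y / N - 1)) (1 / √(x * (N - x))) x := by
  have hN : 0 < N := hx.trans hxN
  have hinner : HasDerivAt (fun y => 2 * y / N - 1) (2 / N) x := by
    simpa using ((hasDerivAt_id x).const_mul 2).div_const N |>.sub_const 1
  have h1 : 2 * x / N - 1 ≠ -1 := by
    rw [Ne, sub_eq_neg_self]; positivity
  have h2 : 2 * x / N - 1 ≠ 1 := by
    intro h; field_simp at h; linarith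
  refine ((hasDerivAt_arcsin h1 h2).comp x hinner).congr_deriv ?_
  have hsq : 1 - (2 * x / N - 1) ^ 2 = (2 / N) ^ 2 * (x * (N - x)) := by field_simp; ring
  rw [hsq, sqrt_mul (by positivity), sqrt_sq (by positivity)]
  field_simp

theorem one_div_sqrt_le_arcsin_sub {N a x : ℝ} (ha : 0 ≤ a) (haN : a + 1 ≤ N)
    (hx : ∀ c ∈ Set.Ioo a (a + 1), c * (N - c) ≤ x * (N - x)) :
    1 / √(x * (N - x)) ≤ arcsin (2 * (a + 1) / N - 1) - arcsin (2 * a / N - 1) := by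
  obtain ⟨c, hc, hslope⟩ := exists_hasDerivAt_eq_slope (fun y => arcsin (2 * y / N - 1))
    (fun c => 1 / √(c * (N - c))) (lt_add_one a) (by fun_prop)
    fun c hc => hasDerivAt_arcsin_two_mul_div_sub_one (ha.trans_lt hc.1) (hc.2.trans_le haN)
  rw [add_sub_cancel_left, div_one] at hslope
  rw [← hslope]
  have hcpos : 0 < c * (N - c) := mul_pos (ha.trans_lt hc.1) (by linarith [hc.2])
  exact one_div_le_one_div_of_le (sqrt_pos.2 hcpos) (sqrt_le_sqrt (hx c hc))

theorem one_div_sqrt_le_arcsin_sub_of_two_mul_le {N a : ℝ} (ha : 0 ≤ a)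
    (haN : 2 * (a + 1) ≤ N) :
    1 / √((a + 1) * (N - (a + 1))) ≤ arcsin (2 * (a + 1) / N - 1) - arcsin (2 * a / N - 1) :=
  one_div_sqrt_le_arcsin_sub ha (by linarith) fun c hc => by nlinarith [hc.1, hc.2]

theorem one_div_sqrt_le_arcsin_sub_of_le_two_mul {N a : ℝ} (ha : N ≤ 2 * a)
    (haN : a + 1 ≤ N) :
    1 / √(a * (N - a)) ≤ arcsin (2 * (a + 1) / N - 1) - arcsin (2 * a / N - 1) :=
  one_div_sqrt_le_arcsin_sub (by linarith) haN fun c hc => by nlinarith [hc.1, hc.2]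

theorem sum_range_one_div_sqrt_mul_sub_le_pi (L : ℕ) :
    ∑ i ∈ range L, 1 / √(((i : ℝ) + 1) * ((L : ℝ) + 2 - ((i : ℝ) + 1))) ≤ π := by
  set G : ℕ → ℝ := fun j => arcsin (2 * j / ((L : ℝ) + 2) - 1)
  have hG : Monotone G := fun i j hij => monotone_arcsin <| by gcongr
  have hdec : ∀ i < (L + 1) / 2, 1 / √(((i : ℝ) + 1) * ((L : ℝ) + 2 - ((i : ℝ) + 1)))
      ≤ G (i + 1) - G i := fun i hi => by
    have hi' : 2 * ((i : ℝ) + 1) ≤ L + 2 := by exact_mod_cast (by omega : 2 * (i + 1) ≤ L + 2)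
    simpa [G] using one_div_sqrt_le_arcsin_sub_of_two_mul_le i.cast_nonneg hi'
  have hinc : ∀ i, (L + 1) / 2 ≤ i → i < L →
      1 / √(((i : ℝ) + 1) * ((L : ℝ) + 2 - ((i : ℝ) + 1))) ≤ G (i + 2) - G (i + 1) :=
      fun i hmi hiL => by
    have hi : (L : ℝ) + 2 ≤ 2 * ((i : ℝ) + 1) := by
      exact_mod_cast (by omega : L + 2 ≤ 2 * (i + 1))
    have hi' : (i : ℝ) + 1 + 1 ≤ L + 2 := by exact_mod_cast (by omega : i + 1 + 1 ≤ L + 2)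
    simpa [G, add_assoc, one_add_one_eq_two] using
      one_div_sqrt_le_arcsin_sub_of_le_two_mul hi hi'
  have hends : G (L + 1) - G 0 ≤ π := by
    simp only [G, CharP.cast_eq_zero, mul_zero, zero_div, zero_sub, arcsin_neg_one]
    linarith [arcsin_le_pi_div_two (2 * ((L + 1 : ℕ) : ℝ) / ((L : ℝ) + 2) - 1)]
  linarith [sum_range_le_sub_of_valley hG (by omega) hdec hinc]

/-- For every integer `n ≥ 2`, `∑_{k=1}^{n-1} 1/√(kn - k²) ≤ π + 1/√(n-1) + 2/√n`. -/
theorem stmt_6 (n : ℕ) (hn : 2 ≤ n) :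
    ∑ k ∈ Finset.Icc 1 (n - 1), 1 / Real.sqrt (k * n - (k : ℝ) ^ 2)
      ≤ Real.pi + 1 / Real.sqrt ((n : ℝ) - 1) + 2 / Real.sqrt n := by
  obtain ⟨L, rfl⟩ : ∃ L, n = L + 2 := ⟨n - 2, by omega⟩
  have hreindex : ∑ k ∈ Icc 1 (L + 2 - 1), 1 / √(k * ((L + 2 : ℕ) : ℝ) - (k : ℝ) ^ 2)
      = ∑ i ∈ range (L + 1), 1 / √(((i : ℝ) + 1) * ((L : ℝ) + 2 - ((i : ℝ) + 1))) := by
    rw [← Ico_add_one_right_eq_Icc, sum_Ico_eq_sum_range, show L + 2 - 1 + 1 - 1 = L + 1 by omega]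
    refine sum_congr rfl fun i _ => ?_
    push_cast
    ring_nf
  have hlast : ((L : ℝ) + 1) * ((L : ℝ) + 2 - ((L : ℝ) + 1)) = ((L + 2 : ℕ) : ℝ) - 1 := by
    push_cast; ring
  have hslack : 0 ≤ 2 / √((L + 2 : ℕ) : ℝ) := by positivity
  rw [hreindex, sum_range_succ, hlast]
  linarith [sum_range_one_div_sqrt_mul_sub_le_pi L]
end

section
/- Let Q(n) denote the number of partitions of n into distinct parts, with Q(0) = 1, and suppose Q(n) < (π/(2√(3n)))·e^{π√(n/3)} for all n ≥ 1. Then the convolution Q₂(n) = ∑_{k=0}^n Q(k)Q(n-k) satisfies Q₂(n) < (π/√(3n))·e^{π√(n/3)} + (π²/12)·e^{π√(2n/3)}·(π + 1/√(n-1) + 2/√n) for all n ≥ 2. -/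
/-!
The two boundary terms of the convolution contribute `2 Q(n)`. For `0 < k < n` the hypothesis
bounds `Q(k) Q(n-k)` by `π²/12 · e^{π(√(k/3) + √((n-k)/3))} / √(k(n-k))`, and concavity of the
square root bounds the exponent by `π √(2n/3)`. Finally `∑_{0<k<n} 1/√(k(n-k)) ≤ π`: the function
`x ↦ arcsin ((2x - n)/n)` is a primitive of `1/√(x(n-x))`, which decreases on `(0, n/2]` and
increases on `[n/2, n)`, so by the mean value theorem each term is dominated by the increment of
the primitive over the neighbouring unit interval on the outer side. These increments telescope to
at most `arcsin 1 - arcsin (-1) = π`.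
-/

open Real Finset

section

variable {c x : ℝ}

theorem hasDerivAt_arcsin_two_mul_sub_div (hx : 0 < x) (hxc : x < c) :
    HasDerivAt (fun y => arcsin ((2 * y - c) / c)) (1 / √(x * (c - x))) x := by
  have hc : 0 < c := hx.trans hxc
  have hlin : HasDerivAt (fun y => (2 * y - c) / c) (2 / c) x := by
    simpa using (((hasDerivAt_id x).const_mul 2).sub_const c).div_const c
  have hlo : (2 * x - c) / c ≠ -1 := by
    rw [ne_eq, div_eq_iff hc.ne']; intro h; linarith
  have hhi : (2 * x - c) / c ≠ 1 := by
    rw [ne_eq, div_eq_iff hc.ne']; intro h; linarith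
  refine ((hasDerivAt_arcsin hlo hhi).comp x hlin).congr_deriv ?_
  have hsq : 1 - ((2 * x - c) / c) ^ 2 = (2 / c) ^ 2 * (x * (c - x)) := by
    field_simp; ring
  have hpos : 0 < √(x * (c - x)) := sqrt_pos.mpr (mul_pos hx (by linarith))
  rw [hsq, sqrt_mul (by positivity), sqrt_sq (by positivity)]
  field_simp

theorem one_div_sqrt_mul_sub_le_of_le_of_two_mul_le {y : ℝ} (hx : 0 < x) (hxy : x ≤ y)
    (hy : 2 * y ≤ c) : 1 / √(y * (c - y)) ≤ 1 / √(x * (c - x)) := by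
  have hprod : 0 < x * (c - x) := mul_pos hx (by linarith)
  gcongr 1 / √?_
  nlinarith

theorem one_div_sqrt_mul_sub_le_arcsin_sub_of_two_mul_le (hx : 1 ≤ x) (hxc : 2 * x ≤ c) :
    1 / √(x * (c - x)) ≤ arcsin ((2 * x - c) / c) - arcsin ((2 * (x - 1) - c) / c) := by
  obtain ⟨ξ, ⟨hξ₀, hξ₁⟩, hξ⟩ := exists_hasDerivAt_eq_slope
    (fun y => arcsin ((2 * y - c) / c)) (fun y => 1 / √(y * (c - y))) (sub_one_lt x)
    (by fun_prop) fun y hy =>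
      hasDerivAt_arcsin_two_mul_sub_div (by linarith [hy.1]) (by linarith [hy.2])
  rw [sub_sub_cancel, div_one] at hξ
  rw [← hξ]
  exact one_div_sqrt_mul_sub_le_of_le_of_two_mul_le (by linarith) hξ₁.le hxc

theorem one_div_sqrt_mul_sub_le_arcsin_sub_of_le_two_mul (hx : c ≤ 2 * x) (hxc : x + 1 ≤ c) :
    1 / √(x * (c - x)) ≤ arcsin ((2 * (x + 1) - c) / c) - arcsin ((2 * x - c) / c) := by
  have h := one_div_sqrt_mul_sub_le_arcsin_sub_of_two_mul_le (x := c - x) (c := c)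
    (by linarith) (by linarith)
  rw [sub_sub_cancel, mul_comm] at h
  have e₁ : (2 * (c - x) - c) / c = -((2 * x - c) / c) := by ring
  have e₂ : (2 * (c - x - 1) - c) / c = -((2 * (x + 1) - c) / c) := by ring
  rwa [e₁, e₂, arcsin_neg, arcsin_neg, neg_sub_neg] at h

end

theorem sum_one_div_sqrt_mul_sub_le_pi (n : ℕ) :
    ∑ k ∈ Ico 1 n, 1 / √((k : ℝ) * (n - k)) ≤ π := by
  rcases Nat.eq_zero_or_pos n with rfl | hn
  · simp [pi_nonneg]
  have hn' : (0 : ℝ) < n := by exact_mod_cast hn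
  set g : ℝ → ℝ := fun x => arcsin ((2 * x - n) / n) with hg
  set m := n / 2 with hm
  have hleft : ∑ k ∈ Ico 1 (m + 1), 1 / √((k : ℝ) * (n - k)) ≤ g m - g 0 := by
    have htele := sum_Ico_sub (fun j : ℕ => g ((j : ℝ) - 1)) (by omega : 1 ≤ m + 1)
    push_cast at htele
    simp only [add_sub_cancel_right, sub_self] at htele
    rw [← htele]
    refine sum_le_sum fun k hk => ?_
    rw [mem_Ico] at hk
    exact one_div_sqrt_mul_sub_le_arcsin_sub_of_two_mul_le (by exact_mod_cast hk.1)
      (by exact_mod_cast (by omega : 2 * k ≤ n))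
  have hright : ∑ k ∈ Ico (m + 1) n, 1 / √((k : ℝ) * (n - k)) ≤ g n - g (m + 1) := by
    have htele := sum_Ico_sub (fun j : ℕ => g j) (by omega : m + 1 ≤ n)
    push_cast at htele
    rw [← htele]
    refine sum_le_sum fun k hk => ?_
    rw [mem_Ico] at hk
    exact one_div_sqrt_mul_sub_le_arcsin_sub_of_le_two_mul
      (by exact_mod_cast (by omega : n ≤ 2 * k)) (by exact_mod_cast (by omega : k + 1 ≤ n))
  have hmono : g m ≤ g (m + 1) := arcsin_le_arcsin (by gcongr; linarith)
  have hends : g n - g 0 = π := by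
    simp [hg, hn'.ne', arcsin_neg, two_mul]
  rw [← sum_Ico_consecutive _ (by omega : 1 ≤ m + 1) (by omega : m + 1 ≤ n)]
  linarith

theorem sqrt_add_sqrt_le_sqrt_two_mul_add {a b : ℝ} (ha : 0 ≤ a) (hb : 0 ≤ b) :
    √a + √b ≤ √(2 * (a + b)) :=
  le_sqrt_of_sq_le <| by nlinarith [sq_nonneg (√a - √b), sq_sqrt ha, sq_sqrt hb]

noncomputable def distinctPartitionsBound (x : ℝ) : ℝ :=
  π / (2 * √(3 * x)) * exp (π * √(x / 3))

theorem distinctPartitionsBound_mul_le {c x : ℝ} (hx : 0 < x) (hxc : x < c) :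
    distinctPartitionsBound x * distinctPartitionsBound (c - x)
      ≤ π ^ 2 / 12 * exp (π * √(2 * c / 3)) * (1 / √(x * (c - x))) := by
  set E := exp (π * √(x / 3)) * exp (π * √((c - x) / 3)) with hE
  have hroot : √(3 * x) * √(3 * (c - x)) = 3 * √(x * (c - x)) := by
    rw [← sqrt_mul (by positivity), show 3 * x * (3 * (c - x)) = 3 ^ 2 * (x * (c - x)) by ring,
      sqrt_mul (by positivity), sqrt_sq (by norm_num)]
  have hprod : distinctPartitionsBound x * distinctPartitionsBound (c - x)
      = π ^ 2 * E / (4 * (√(3 * x) * √(3 * (c - x)))) := by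
    unfold distinctPartitionsBound
    ring
  have hexp : E ≤ exp (π * √(2 * c / 3)) := by
    rw [hE, ← exp_add, ← mul_add]
    gcongr
    calc √(x / 3) + √((c - x) / 3) ≤ √(2 * (x / 3 + (c - x) / 3)) :=
          sqrt_add_sqrt_le_sqrt_two_mul_add (by positivity) (by linarith)
      _ = √(2 * c / 3) := by ring_nf
  calc distinctPartitionsBound x * distinctPartitionsBound (c - x)
      = π ^ 2 / 12 * E * (1 / √(x * (c - x))) := by rw [hprod, hroot]; ring
    _ ≤ π ^ 2 / 12 * exp (π * √(2 * c / 3)) * (1 / √(x * (c - x))) := by gcongr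

/-- Let `Q(n)` be the number of partitions of `n` into distinct parts.  If
`Q(n) < (π/(2√(3n))) e^{π√(n/3)}` for all `n ≥ 1`, then the convolution
`Q₂(n) = ∑_{k=0}^n Q(k)Q(n-k)` satisfies
`Q₂(n) < (π/√(3n)) e^{π√(n/3)} + (π²/12) e^{π√(2n/3)} (π + 1/√(n-1) + 2/√n)`
for all `n ≥ 2`. -/
theorem stmt_7
    (Q : ℕ → ℕ) (hQdef : ∀ n, Q n = (Nat.Partition.distincts n).card)
    (hQ : ∀ n : ℕ, 1 ≤ n →
      (Q n : ℝ) < Real.pi / (2 * Real.sqrt (3 * n)) * Real.exp (Real.pi * Real.sqrt (n / 3)))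
    (n : ℕ) (hn : 2 ≤ n) :
    ((∑ k ∈ Finset.range (n + 1), Q k * Q (n - k) : ℕ) : ℝ)
      < Real.pi / Real.sqrt (3 * n) * Real.exp (Real.pi * Real.sqrt (n / 3))
        + Real.pi ^ 2 / 12 * Real.exp (Real.pi * Real.sqrt (2 * n / 3))
          * (Real.pi + 1 / Real.sqrt ((n : ℝ) - 1) + 2 / Real.sqrt n) := by
  have hn₀ : 0 < n := by omega
  have hQ₀ : Q 0 = 1 := by rw [hQdef]; decide
  have hsplit : ∑ k ∈ range (n + 1), Q k * Q (n - k)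
      = 2 * Q n + ∑ k ∈ Ico 1 n, Q k * Q (n - k) := by
    rw [sum_range_succ, range_eq_Ico, sum_eq_sum_Ico_succ_bot hn₀, Nat.sub_self, Nat.sub_zero,
      hQ₀]
    ring
  set C := π ^ 2 / 12 * exp (π * √(2 * n / 3))
  have hterm (k : ℕ) (hk : k ∈ Ico 1 n) :
      (Q k * Q (n - k) : ℝ) ≤ C * (1 / √((k : ℝ) * (n - k))) := by
    obtain ⟨hk₁, hkn⟩ := mem_Ico.mp hk
    calc (Q k * Q (n - k) : ℝ)
        ≤ distinctPartitionsBound k * distinctPartitionsBound (n - k) := by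
          rw [← Nat.cast_sub hkn.le]
          exact mul_le_mul (hQ k hk₁).le (hQ (n - k) (by omega)).le (by positivity)
            ((Nat.cast_nonneg _).trans (hQ k hk₁).le)
      _ ≤ C * (1 / √((k : ℝ) * (n - k))) :=
          distinctPartitionsBound_mul_le (by exact_mod_cast hk₁) (by exact_mod_cast hkn)
  have hmid : ∑ k ∈ Ico 1 n, (Q k * Q (n - k) : ℝ) ≤ C * π := calc
    _ ≤ ∑ k ∈ Ico 1 n, C * (1 / √((k : ℝ) * (n - k))) := sum_le_sum hterm
    _ = C * ∑ k ∈ Ico 1 n, 1 / √((k : ℝ) * (n - k)) := (mul_sum ..).symm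
    _ ≤ C * π := by gcongr; exact sum_one_div_sqrt_mul_sub_le_pi n
  have hedge := hQ n hn₀
  have hextra : 0 ≤ 1 / √((n : ℝ) - 1) + 2 / √n := by positivity
  have hC₀ : 0 < C := by positivity
  rw [hsplit, show π / √(3 * n) = 2 * (π / (2 * √(3 * n))) by ring]
  push_cast
  nlinarith
end
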